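/- Let A be a finite connected simple graph with at least three vertices that has a pendant vertex (a vertex of degree 1). Then the subdivision graph S(A) is not 2-edge distance-balanced. -/

import Mathlib

open SimpleGraph

/-- Distance from a vertex to an edge (as an unordered pair): the minimum of
the distances to the two endpoints. -/
noncomputable def eDist {V : Type*} (G : SimpleGraph V) (g : V) (f : Sym2 V) : ℕ :=
  Sym2.lift ⟨fun x y => min (G.dist g x) (G.dist g y), fun _ _ => min_comm _ _⟩ f

/-- The number of edges of `G` that are closer to `g` than to `h`. -/
noncomputable def mCloser {V : Type*} (G : SimpleGraph V) (g h : V) : ℕ :=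
  {f ∈ G.edgeSet | eDist G g f < eDist G h f}.ncard

/-- `G` is 2-edge distance-balanced. -/
def TwoEDB {V : Type*} (G : SimpleGraph V) : Prop :=
  ∀ g h : V, G.dist g h = 2 → mCloser G g h = mCloser G h g

/-- The subdivision graph `S(A)`: insert a new vertex into each edge of `A`
(replace every edge by a path of length 2). -/
def Sgraph {α : Type*} (G : SimpleGraph α) : SimpleGraph (α ⊕ G.edgeSet) where
  Adj x y :=
    (∃ u e, x = Sum.inl u ∧ y = Sum.inr e ∧ u ∈ (e : Sym2 α)) ∨
    (∃ u e, x = Sum.inr e ∧ y = Sum.inl u ∧ u ∈ (e : Sym2 α))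
  symm := by
    constructor
    rintro x y (⟨u, e, hx, hy, h⟩ | ⟨u, e, hx, hy, h⟩)
    · exact Or.inr ⟨u, e, hy, hx, h⟩
    · exact Or.inl ⟨u, e, hy, hx, h⟩
  loopless := by
    constructor
    rintro x (⟨u, e, hx, hy, h⟩ | ⟨u, e, hx, hy, h⟩) <;> simp_all

open SimpleGraph

/-!
Let `v` be the pendant vertex of `A` and `w` its neighbour. In `S(A)` the path `v – vw – w` hangs
off the rest of the graph: every vertex other than `v` and the subdivision vertex `vw` is exactly
two steps farther from `v` than from `w`. Hence the only edge closer to `v` than to `w` is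
`{v, vw}`, while `{vw, w}` and every edge at a third vertex of `A` (one exists as `A` is connected
with at least three vertices) are closer to `w`. So `m_{v2w} = 1 < 2 ≤ m_{w2v}` although
`d(v, w) = 2`.
-/

lemma eDist_mk {V : Type*} (G : SimpleGraph V) (g x y : V) :
    eDist G g s(x, y) = min (G.dist g x) (G.dist g y) := rfl

section PendantPath

variable {V : Type*} {G : SimpleGraph V} {v m w : V}

lemma dist_eq_dist_add_two_of_pendant (hG : G.Preconnected) (hv : G.neighborSet v = {m})
    (hm : G.neighborSet m = {v, w}) {z : V} (hzv : z ≠ v) (hzm : z ≠ m) :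
    G.dist v z = G.dist w z + 2 := by
  have adj_v : ∀ {y}, G.Adj v y ↔ y = m := by
    intro y; rw [← mem_neighborSet, hv, Set.mem_singleton_iff]
  have adj_m : ∀ {y}, G.Adj m y ↔ y = v ∨ y = w := by
    intro y; rw [← mem_neighborSet, hm, Set.mem_insert_iff, Set.mem_singleton_iff]
  obtain ⟨q, hq⟩ := (hG w z).exists_walk_length_eq_dist
  have h_le := dist_le (.cons (adj_v.mpr rfl) (.cons (adj_m.mpr (.inr rfl)) q))
  obtain ⟨p, hp⟩ := (hG v z).exists_walk_length_eq_dist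
  cases p with
  | nil => exact absurd rfl hzv
  | cons h₁ p₁ =>
    obtain rfl := adj_v.mp h₁
    cases p₁ with
    | nil => exact absurd rfl hzm
    | cons h₂ p₂ =>
      have := dist_le p₂
      rcases adj_m.mp h₂ with rfl | rfl <;> simp only [Walk.length_cons] at hp h_le <;> omega

lemma dist_eq_two_of_pendant (hG : G.Preconnected) (hv : G.neighborSet v = {m})
    (hm : G.neighborSet m = {v, w}) (hvw : v ≠ w) : G.dist v w = 2 := by
  have hmw : G.Adj m w := by simp [← mem_neighborSet, hm]
  simpa using dist_eq_dist_add_two_of_pendant hG hv hm hvw.symm hmw.ne.symm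

lemma ne_of_mk_mem_edgeSet_of_pendant (hv : G.neighborSet v = {m})
    (hm : G.neighborSet m = {v, w}) {x y : V} (hxy : G.Adj x y)
    (h₁ : s(x, y) ≠ s(v, m)) (h₂ : s(x, y) ≠ s(m, w)) : x ≠ v ∧ x ≠ m := by
  constructor
  · rintro rfl
    have : y = m := by simpa [← mem_neighborSet, hv] using hxy
    exact h₁ (by rw [this])
  · rintro rfl
    have : y = v ∨ y = w := by simpa [← mem_neighborSet, hm] using hxy
    rcases this with rfl | rfl
    · exact h₁ Sym2.eq_swap
    · exact h₂ rfl

lemma eDist_eq_eDist_add_two_of_pendant (hG : G.Preconnected) (hv : G.neighborSet v = {m})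
    (hm : G.neighborSet m = {v, w}) {f : Sym2 V} (hf : f ∈ G.edgeSet)
    (h₁ : f ≠ s(v, m)) (h₂ : f ≠ s(m, w)) : eDist G v f = eDist G w f + 2 := by
  induction f with
  | h x y =>
    have hxy : G.Adj x y := hf
    obtain ⟨hxv, hxm⟩ := ne_of_mk_mem_edgeSet_of_pendant hv hm hxy h₁ h₂
    obtain ⟨hyv, hym⟩ := ne_of_mk_mem_edgeSet_of_pendant hv hm hxy.symm
      (by rwa [Sym2.eq_swap]) (by rwa [Sym2.eq_swap])
    rw [eDist_mk, eDist_mk, dist_eq_dist_add_two_of_pendant hG hv hm hxv hxm,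
      dist_eq_dist_add_two_of_pendant hG hv hm hyv hym]
    omega

lemma mCloser_eq_one_of_pendant (hG : G.Preconnected) (hv : G.neighborSet v = {m})
    (hm : G.neighborSet m = {v, w}) (hvw : v ≠ w) : mCloser G v w = 1 := by
  have hvm : G.Adj v m := by simp [← mem_neighborSet, hv]
  have hmw : G.Adj m w := by simp [← mem_neighborSet, hm]
  have hwv : G.dist w v = 2 := dist_comm.trans (dist_eq_two_of_pendant hG hv hm hvw)
  have hwm : G.dist w m = 1 := dist_eq_one_iff_adj.mpr hmw.symm
  suffices {f ∈ G.edgeSet | eDist G v f < eDist G w f} = {s(v, m)} by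
    rw [mCloser, this, Set.ncard_singleton]
  ext f
  simp only [Set.mem_ofPred_eq, Set.mem_singleton_iff]
  constructor
  · rintro ⟨hf, hlt⟩
    by_contra h₁
    by_cases h₂ : f = s(m, w)
    · simp [h₂, eDist_mk] at hlt
    · have := eDist_eq_eDist_add_two_of_pendant hG hv hm hf h₁ h₂
      omega
  · rintro rfl
    simp [eDist_mk, hwv, hwm, hvm]

lemma two_le_mCloser_of_pendant [Finite V] (hG : G.Preconnected) (hv : G.neighborSet v = {m})
    (hm : G.neighborSet m = {v, w}) (hvw : v ≠ w)
    (hf : ∃ f ∈ G.edgeSet, f ≠ s(v, m) ∧ f ≠ s(m, w)) : 2 ≤ mCloser G w v := by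
  obtain ⟨f, hf, h₁, h₂⟩ := hf
  have hvm : G.Adj v m := by simp [← mem_neighborSet, hv]
  have hmw : G.Adj m w := by simp [← mem_neighborSet, hm]
  have hd := dist_eq_two_of_pendant hG hv hm hvw
  have h_mw : s(m, w) ∈ {f ∈ G.edgeSet | eDist G w f < eDist G v f} :=
    ⟨hmw, by simp [eDist_mk, dist_comm (u := w), dist_eq_one_iff_adj.mpr hvm, hd]⟩
  have h_f : f ∈ {f ∈ G.edgeSet | eDist G w f < eDist G v f} :=
    ⟨hf, by rw [eDist_eq_eDist_add_two_of_pendant hG hv hm hf h₁ h₂]; omega⟩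
  exact (Set.one_lt_ncard (Set.toFinite _)).mpr ⟨_, h_mw, _, h_f, Ne.symm h₂⟩

theorem not_twoEDB_of_pendant [Finite V] (hG : G.Preconnected) (hv : G.neighborSet v = {m})
    (hm : G.neighborSet m = {v, w}) (hvw : v ≠ w)
    (hf : ∃ f ∈ G.edgeSet, f ≠ s(v, m) ∧ f ≠ s(m, w)) : ¬ TwoEDB G := by
  intro h
  have h_eq := h v w (dist_eq_two_of_pendant hG hv hm hvw)
  rw [mCloser_eq_one_of_pendant hG hv hm hvw] at h_eq
  have := two_le_mCloser_of_pendant hG hv hm hvw hf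
  omega

end PendantPath

namespace Sgraph

variable {α : Type*} {A : SimpleGraph α}

@[simp]
lemma adj_inl_inr {u : α} {e : A.edgeSet} :
    (Sgraph A).Adj (.inl u) (.inr e) ↔ u ∈ (e : Sym2 α) := by
  constructor
  · rintro (⟨u', e', h₁, h₂, h₃⟩ | ⟨u', e', h₁, h₂, h₃⟩) <;> simp_all
  · exact fun h => .inl ⟨u, e, rfl, rfl, h⟩

lemma adj_inl_iff {u : α} {z : α ⊕ A.edgeSet} :
    (Sgraph A).Adj (.inl u) z ↔ ∃ e : A.edgeSet, u ∈ (e : Sym2 α) ∧ z = .inr e := by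
  constructor
  · rintro (⟨u', e, h₁, rfl, h⟩ | ⟨_, _, h₁, -, -⟩) <;> simp only [Sum.inl.injEq, reduceCtorEq] at h₁
    exact ⟨e, h₁ ▸ h, rfl⟩
  · rintro ⟨e, h, rfl⟩
    exact adj_inl_inr.mpr h

lemma adj_inr_iff {e : A.edgeSet} {z : α ⊕ A.edgeSet} :
    (Sgraph A).Adj (.inr e) z ↔ ∃ u ∈ (e : Sym2 α), z = .inl u := by
  constructor
  · rintro (⟨_, _, h₁, -, -⟩ | ⟨u, e', h₁, rfl, h⟩) <;> simp only [Sum.inr.injEq, reduceCtorEq] at h₁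
    exact ⟨u, h₁ ▸ h, rfl⟩
  · rintro ⟨u, h, rfl⟩
    exact (adj_inl_inr.mpr h).symm

lemma neighborSet_inl_of_neighborSet_eq {v w : α} {e : A.edgeSet} (hv : A.neighborSet v = {w})
    (he : (e : Sym2 α) = s(v, w)) : (Sgraph A).neighborSet (.inl v) = {.inr e} := by
  ext z
  simp only [mem_neighborSet, adj_inl_iff, Set.mem_singleton_iff]
  constructor
  · rintro ⟨⟨f, hf⟩, hvf, rfl⟩
    induction f with
    | h x y =>
      obtain rfl | rfl := Sym2.mem_iff.mp hvf
      · have : y = w := by simpa [← mem_neighborSet, hv] using hf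
        subst this
        simp [← Subtype.coe_inj, he]
      · have : x = w := by simpa [← mem_neighborSet, hv] using (A.mem_edgeSet.mp hf).symm
        subst this
        simp [← Subtype.coe_inj, he, Sym2.eq_swap]
  · rintro rfl
    exact ⟨e, by simp [he], rfl⟩

lemma neighborSet_inr {e : A.edgeSet} {x y : α} (he : (e : Sym2 α) = s(x, y)) :
    (Sgraph A).neighborSet (.inr e) = {.inl x, .inl y} := by
  ext z
  simp [adj_inr_iff, he, or_and_right, exists_or]

lemma reachable_inl {a b : α} (h : A.Reachable a b) :
    (Sgraph A).Reachable (.inl a) (.inl b) := by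
  obtain ⟨p⟩ := h
  induction p with
  | nil => exact .rfl
  | @cons a c _ hac _ ih =>
    have h₁ := adj_inl_inr (e := ⟨s(a, c), hac⟩) |>.mpr (Sym2.mem_mk_left a c)
    have h₂ := adj_inl_inr (e := ⟨s(a, c), hac⟩) |>.mpr (Sym2.mem_mk_right a c)
    exact (h₁.reachable.trans h₂.reachable.symm).trans ih

lemma preconnected (hA : A.Preconnected) : (Sgraph A).Preconnected := by
  have h_inl : ∀ z, ∃ u, (Sgraph A).Reachable (.inl u) z := by
    rintro (u | ⟨e, he⟩)
    · exact ⟨u, .rfl⟩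
    · induction e with
      | h x y => exact ⟨x, (adj_inl_inr.mpr (Sym2.mem_mk_left x y)).reachable⟩
  intro z z'
  obtain ⟨u, hu⟩ := h_inl z
  obtain ⟨u', hu'⟩ := h_inl z'
  exact hu.symm.trans ((reachable_inl (hA u u')).trans hu')

end Sgraph

lemma exists_adj_ne_ne_of_three_le_card {α : Type*} [Fintype α] {A : SimpleGraph α}
    (hA : A.Preconnected) (hcard : 3 ≤ Fintype.card α) (v w : α) :
    ∃ x y, x ≠ v ∧ x ≠ w ∧ A.Adj x y := by
  classical
  have : ({v, w} : Finset α).card < (Finset.univ : Finset α).card :=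
    Finset.card_le_two.trans_lt (by rw [Finset.card_univ]; omega)
  obtain ⟨x, -, hx⟩ := Finset.exists_mem_notMem_of_card_lt_card this
  obtain ⟨hxv, hxw⟩ : x ≠ v ∧ x ≠ w := by simpa only [Finset.mem_insert, Finset.mem_singleton,
    not_or] using hx
  have : Nontrivial α := ⟨⟨x, v, hxv⟩⟩
  obtain ⟨y, hxy⟩ := exists_adj_iff_not_isIsolated.mpr (hA.not_isIsolated x)
  exact ⟨x, y, hxv, hxw, hxy⟩

theorem Sgraph_pendant_not_twoEDB_general {α : Type*} [Fintype α]
    (A : SimpleGraph α) [DecidableRel A.Adj]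
    (hA : A.Connected) (hcard : 3 ≤ Fintype.card α)
    (hpendant : ∃ v : α, A.degree v = 1) :
    ¬ TwoEDB (Sgraph A) := by
  obtain ⟨v, hdeg⟩ := hpendant
  obtain ⟨w, hvw, hw⟩ := degree_eq_one_iff_existsUnique_adj.mp hdeg
  have hv : A.neighborSet v = {w} := Set.eq_singleton_iff_unique_mem.mpr ⟨hvw, hw⟩
  obtain ⟨x, y, hxv, hxw, hxy⟩ := exists_adj_ne_ne_of_three_le_card hA.preconnected hcard v w
  let e₀ : A.edgeSet := ⟨s(v, w), hvw⟩
  refine not_twoEDB_of_pendant (m := .inr e₀) (Sgraph.preconnected hA.preconnected)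
    (Sgraph.neighborSet_inl_of_neighborSet_eq hv rfl) (Sgraph.neighborSet_inr rfl)
    (by simpa using hvw.ne) ⟨s(.inl x, .inr ⟨s(x, y), hxy⟩), ?_, ?_, ?_⟩
  · exact Sgraph.adj_inl_inr.mpr (Sym2.mem_mk_left x y)
  all_goals simp [hxv, hxw]

theorem Sgraph_pendant_not_twoEDB {α : Type*} [Fintype α] [DecidableEq α]
    (A : SimpleGraph α) [DecidableRel A.Adj]
    (hA : A.Connected) (hcard : 3 ≤ Fintype.card α)
    (hpendant : ∃ v : α, A.degree v = 1) :
    ¬ TwoEDB (Sgraph A) :=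
  Sgraph_pendant_not_twoEDB_general A hA hcard hpendant
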